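/- arXiv:2509.09925 — 4 statements merged into one kernel-verified Lean document; each statement's English description precedes it below -/
import Mathlib

section
/- If G is a simple connected graph, then there exists a maximum generalized 4-independent set of G containing all pendant vertices (vertices of degree one) of G. -/
/-- `S` is a generalized `k`-independent set of `G`: the induced subgraph `G[S]` contains no
tree on `k` vertices as a subgraph, equivalently every connected component of `G[S]` has
fewer than `k` vertices, equivalently every connected induced subgraph inside `S` has
fewer than `k` vertices. -/
def SimpleGraph.IsGenIndepSet {V : Type*} (G : SimpleGraph V) (k : ℕ) (S : Finset V) : Prop :=
  ∀ T : Finset V, T ⊆ S → (G.induce (T : Set V)).Connected → T.card < k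

/-- The generalized `k`-independence number `α_k(G)`, the maximum cardinality of a
generalized `k`-independent set. -/
noncomputable def SimpleGraph.genIndepNum {V : Type*} (G : SimpleGraph V) (k : ℕ) : ℕ :=
  sSup {n | ∃ S : Finset V, G.IsGenIndepSet k S ∧ S.card = n}

lemma pendant_nbr {V : Type*} {G : SimpleGraph V} {v : V}
    (h : Nat.card (G.neighborSet v) = 1) :
    ∃ u, G.Adj v u ∧ ∀ w, G.Adj v w → w = u := by
  rw [Nat.card_coe_set_eq, Set.ncard_eq_one] at h
  obtain ⟨u, hu⟩ := h
  refine ⟨u, ?_, fun w hw => ?_⟩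
  · have : u ∈ G.neighborSet v := by rw [hu]; rfl
    exact this
  · have : w ∈ G.neighborSet v := hw
    rw [hu] at this
    exact this

lemma walk_two {V : Type*} {G : SimpleGraph V} {u v : V}
    (hu : ∀ w, G.Adj u w → w = v) (hv : ∀ w, G.Adj v w → w = u) :
    ∀ {a b : V} (_ : G.Walk a b), (a = u ∨ a = v) → (b = u ∨ b = v) := by
  intro a b p
  induction p with
  | nil => exact id
  | cons h q ih =>
    rintro (rfl | rfl)
    · exact ih (Or.inr (hu _ h))
    · exact ih (Or.inl (hv _ h))

lemma indep_insert {V : Type*} [DecidableEq V] (G : SimpleGraph V) (S : Finset V) (v u : V)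
    (hv : ∀ w, G.Adj v w → w = u) (hu : u ∉ insert v S)
    (hS : G.IsGenIndepSet 4 S) : G.IsGenIndepSet 4 (insert v S) := by
  intro T hT hconn
  by_cases hvT : v ∈ T
  · by_cases hw : ∃ w ∈ T, w ≠ v
    · obtain ⟨w, hwT, hwv⟩ := hw
      have hvT' : v ∈ (T : Set V) := hvT
      have hwT' : w ∈ (T : Set V) := hwT
      obtain ⟨p⟩ := hconn.preconnected ⟨v, hvT'⟩ ⟨w, hwT'⟩
      cases p with
      | nil => exact absurd rfl hwv.symm
      | cons h q =>
        exfalso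
        have hadj : G.Adj v (_ : (T : Set V)) := h
        have := hv _ hadj
        apply hu
        rw [← this]
        exact hT (by exact_mod_cast (Subtype.mem _))
    · push_neg at hw
      have : T ⊆ {v} := fun w hwT => Finset.mem_singleton.mpr (hw w hwT)
      calc T.card ≤ 1 := by simpa using Finset.card_le_card this
        _ < 4 := by norm_num
  · refine hS T (fun w hwT => ?_) hconn
    rcases Finset.mem_insert.mp (hT hwT) with rfl | h
    · exact absurd hwT hvT
    · exact h

/-- Every simple connected graph has a maximum generalized 4-independent set containing
all pendant vertices. -/
theorem exists_max_genIndepSet_pendant {V : Type*} [Fintype V] (G : SimpleGraph V)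
    (hG : G.Connected) :
    ∃ S : Finset V, G.IsGenIndepSet 4 S ∧ S.card = G.genIndepNum 4 ∧
      ∀ v : V, Nat.card (G.neighborSet v) = 1 → v ∈ S := by
  classical
  set Ω : Set ℕ := {n | ∃ S : Finset V, G.IsGenIndepSet 4 S ∧ S.card = n} with hΩ
  have bound : ∀ n ∈ Ω, n ≤ Fintype.card V := by
    rintro n ⟨S, -, rfl⟩
    simpa using Finset.card_le_card (Finset.subset_univ S)
  have hbdd : BddAbove Ω := ⟨Fintype.card V, bound⟩
  have hne : Ω.Nonempty := by
    refine ⟨0, ∅, fun T hT _ => ?_, rfl⟩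
    simp [Finset.subset_empty.mp hT]
  have hsup : G.genIndepNum 4 ∈ Ω := Nat.sSup_mem hne hbdd
  have hle : ∀ n ∈ Ω, n ≤ G.genIndepNum 4 := fun n hn => le_csSup hbdd hn
  set A : Finset (Finset V) :=
    Finset.univ.filter (fun S => G.IsGenIndepSet 4 S ∧ S.card = G.genIndepNum 4) with hA
  have hAne : A.Nonempty := by
    obtain ⟨S₀, h1, h2⟩ := hsup
    exact ⟨S₀, by simp [hA, h1, h2]⟩
  obtain ⟨S, hSA, hmax⟩ := A.exists_max_image
    (fun S => (S.filter (fun v => Nat.card (G.neighborSet v) = 1)).card) hAne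
  rw [hA, Finset.mem_filter] at hSA
  obtain ⟨-, hSind, hScard⟩ := hSA
  refine ⟨S, hSind, hScard, ?_⟩
  by_contra hcon
  push_neg at hcon
  obtain ⟨v, hvpend, hvS⟩ := hcon
  obtain ⟨u, hadj, huniq⟩ := pendant_nbr hvpend
  have huv : u ≠ v := fun h => G.irrefl (h ▸ hadj)
  by_cases huS : u ∈ S
  · -- swap u out, v in
    set S' : Finset V := insert v (S.erase u) with hS'
    have hS'ind : G.IsGenIndepSet 4 S' := by
      refine indep_insert G (S.erase u) v u huniq ?_ ?_
      · simp [huv, huv.symm]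
      · exact fun T hT hc => hSind T (hT.trans (Finset.erase_subset _ _)) hc
    have hS'card : S'.card = S.card := by
      rw [hS', Finset.card_insert_of_notMem (fun h => hvS (Finset.mem_of_mem_erase h)),
        Finset.card_erase_of_mem huS]
      have : 1 ≤ S.card := Finset.card_pos.mpr ⟨u, huS⟩
      omega
    by_cases hupend : Nat.card (G.neighborSet u) = 1
    · -- u is also pendant: the graph is just {u, v}
      have hvu : ∀ w, G.Adj u w → w = v := by
        obtain ⟨u', hadj', huniq'⟩ := pendant_nbr hupend
        have : u' = v := by
          have := huniq' v hadj.symm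
          exact this.symm
        exact this ▸ huniq'
      have hall : ∀ w : V, w = u ∨ w = v := by
        intro w
        obtain ⟨p⟩ := hG.preconnected u w
        exact walk_two hvu huniq p (Or.inl rfl)
      have huniv : (Finset.univ : Finset V) ⊆ {u, v} := by
        intro w _
        rcases hall w with rfl | rfl <;> simp
      have hcard2 : Fintype.card V ≤ 2 := by
        calc Fintype.card V = (Finset.univ : Finset V).card := (Finset.card_univ).symm
          _ ≤ ({u, v} : Finset V).card := Finset.card_le_card huniv
          _ ≤ 2 := Finset.card_insert_le _ _ |>.trans (by simp)
      have hunivind : G.IsGenIndepSet 4 (Finset.univ : Finset V) := by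
        intro T _ _
        calc T.card ≤ Fintype.card V := by simpa using Finset.card_le_card (Finset.subset_univ T)
          _ ≤ 2 := hcard2
          _ < 4 := by norm_num
      have : Fintype.card V ≤ G.genIndepNum 4 := by
        refine hle _ ⟨Finset.univ, hunivind, ?_⟩
        simp
      have hle2 : S.card ≤ Fintype.card V := by
        simpa using Finset.card_le_card (Finset.subset_univ S)
      have hSuniv : S = Finset.univ := by
        apply Finset.eq_univ_of_card
        omega
      exact hvS (hSuniv ▸ Finset.mem_univ v)
    · -- u not pendant: S' has more pendants, contradiction
      have hS'A : S' ∈ A := by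
        rw [hA, Finset.mem_filter]
        exact ⟨Finset.mem_univ _, hS'ind, by rw [hS'card, hScard]⟩
      have hkey := hmax S' hS'A
      have hfilter : S'.filter (fun v => Nat.card (G.neighborSet v) = 1)
          = insert v (S.filter (fun v => Nat.card (G.neighborSet v) = 1)) := by
        rw [hS', Finset.filter_insert, if_pos hvpend]
        congr 1
        rw [Finset.filter_erase]
        refine Finset.erase_eq_of_notMem (fun h => hupend ?_)
        exact (Finset.mem_filter.mp h).2
      rw [hfilter] at hkey
      have : v ∉ S.filter (fun v => Nat.card (G.neighborSet v) = 1) := by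
        simp [hvS]
      rw [Finset.card_insert_of_notMem this] at hkey
      omega
  · -- u ∉ S : insert v S is a bigger gen-indep set, contradiction
    have : G.IsGenIndepSet 4 (insert v S) := by
      refine indep_insert G S v u huniq ?_ hSind
      simp [huv, huS]
    have hmem : (insert v S).card ∈ Ω := ⟨_, this, rfl⟩
    have := hle _ hmem
    rw [Finset.card_insert_of_notMem hvS] at this
    omega
end

section
/- If T is a tree on n vertices, then α_4(T) ≥ 3n/4, where α_4 denotes the generalized 4-independence number. -/
/-!
Root the tree at `r` and pick a vertex `v` of maximal depth among those whose subtree has at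
least `k + 1` vertices. Every child subtree of `v` then has at most `k` vertices, so the subtree
of `v` minus `v` itself is a generalized `(k + 1)`-independent set missing only one of at least
`k + 1` vertices, and it has no edge to the rest of the tree, on which we recurse.
This gives `α_{k+1}(T) ≥ k n / (k + 1)`, and `k = 3` is the theorem.
-/

open Finset

namespace SimpleGraph

variable {V : Type*} {G : SimpleGraph V}

lemma forall_mem_of_induce_preconnected {s : Set V} (hs : (G.induce s).Preconnected)
    {P : V → Prop} (hP : ∀ a ∈ s, ∀ b ∈ s, G.Adj a b → P a → P b)
    {x₀ : V} (hx₀ : x₀ ∈ s) (h₀ : P x₀) : ∀ x ∈ s, P x := by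
  suffices ∀ y : s, (G.induce s).Reachable ⟨x₀, hx₀⟩ y → P y from
    fun x hx => this ⟨x, hx⟩ (hs _ _)
  intro y hy
  rw [reachable_iff_reflTransGen] at hy
  induction hy with
  | refl => exact h₀
  | tail _ hbc ih => exact hP _ (Subtype.prop _) _ (Subtype.prop _) (by simpa using hbc) ih

lemma IsGenIndepSet.union {k : ℕ} {A B : Finset V} [DecidableEq V] (hA : G.IsGenIndepSet k A)
    (hB : G.IsGenIndepSet k B) (hAB : ∀ a ∈ A, ∀ b ∈ B, ¬ G.Adj a b) :
    G.IsGenIndepSet k (A ∪ B) := by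
  intro T hT hTc
  by_cases hTA : ∃ t ∈ T, t ∈ A
  · obtain ⟨t, htT, htA⟩ := hTA
    refine hA T (fun x hx => ?_) hTc
    refine forall_mem_of_induce_preconnected hTc.preconnected (P := (· ∈ A)) ?_ htT htA x hx
    intro a _ b hb hab ha
    exact (mem_union.1 (hT hb)).resolve_right fun hbB => hAB a ha b hbB hab
  · push Not at hTA
    exact hB T (fun x hx => (mem_union.1 (hT hx)).resolve_left (hTA x hx)) hTc

lemma IsGenIndepSet.card_le_genIndepNum [Fintype V] {k : ℕ} {S : Finset V}
    (hS : G.IsGenIndepSet k S) : #S ≤ G.genIndepNum k :=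
  le_csSup ⟨Fintype.card V, by rintro _ ⟨T, -, rfl⟩; exact card_le_univ T⟩ ⟨S, hS, rfl⟩

namespace IsTree

section Rooted

variable (hG : G.IsTree) (r : V)

noncomputable def rootPath (u : V) : G.Walk u r :=
  (hG.existsUnique_path u r).exists.choose

lemma isPath_rootPath (u : V) : (hG.rootPath r u).IsPath :=
  (hG.existsUnique_path u r).exists.choose_spec

variable {r} in
lemma eq_rootPath {u : V} {p : G.Walk u r} (hp : p.IsPath) : p = hG.rootPath r u :=
  (hG.existsUnique_path u r).unique hp (hG.isPath_rootPath r u)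

noncomputable def depth (u : V) : ℕ := (hG.rootPath r u).length

/-- `u` lies in the subtree of `v` when the tree is rooted at `r`. -/
def IsDescendant (u v : V) : Prop := v ∈ (hG.rootPath r u).support

noncomputable instance [DecidableEq V] (u v : V) : Decidable (hG.IsDescendant r u v) :=
  inferInstanceAs (Decidable (v ∈ _))

variable {hG r}

lemma isDescendant_refl (u : V) : hG.IsDescendant r u u := Walk.start_mem_support _

lemma IsDescendant.depth_lt [DecidableEq V] {u v : V} (huv : hG.IsDescendant r u v)
    (hne : u ≠ v) : hG.depth r v < hG.depth r u := by
  rw [depth, depth, ← hG.eq_rootPath ((hG.isPath_rootPath r u).dropUntil huv)]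
  exact Walk.length_dropUntil_lt_length huv hne.symm

lemma rootPath_eq_cons_or [DecidableEq V] {a b : V} (hab : G.Adj a b) :
    hG.rootPath r a = .cons hab (hG.rootPath r b) ∨
      hG.rootPath r b = .cons hab.symm (hG.rootPath r a) := by
  by_cases ha : hG.IsDescendant r b a
  · have hb : ¬ hG.IsDescendant r a b := fun hb =>
      (ha.depth_lt hab.ne.symm).not_gt (hb.depth_lt hab.ne)
    exact .inr (hG.eq_rootPath ((hG.isPath_rootPath r a).cons hb)).symm
  · exact .inl (hG.eq_rootPath ((hG.isPath_rootPath r b).cons ha)).symm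

lemma IsDescendant.of_adj [DecidableEq V] {a b v : V} (hav : hG.IsDescendant r a v)
    (hne : a ≠ v) (hab : G.Adj a b) : hG.IsDescendant r b v := by
  rcases rootPath_eq_cons_or (hG := hG) (r := r) hab with he | he
  · rw [IsDescendant, he, Walk.support_cons] at hav
    exact (List.mem_cons.1 hav).resolve_left hne.symm
  · rw [IsDescendant, he, Walk.support_cons]
    exact List.mem_cons_of_mem _ hav

lemma exists_forall_isDescendant [DecidableEq V] {T : Finset V}
    (hT : (G.induce (T : Set V)).Connected) : ∃ t ∈ T, ∀ x ∈ T, hG.IsDescendant r x t := by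
  obtain ⟨⟨t₀, ht₀⟩⟩ := hT.nonempty
  obtain ⟨t, htT, hmin⟩ := T.exists_min_image (hG.depth r) ⟨t₀, ht₀⟩
  refine ⟨t, htT,
    forall_mem_of_induce_preconnected hT.preconnected ?_ htT (isDescendant_refl t)⟩
  intro a _ b hb hab ha
  by_cases hat : a = t
  · subst hat
    rcases rootPath_eq_cons_or (hG := hG) (r := r) hab with he | he
    · have hlen : hG.depth r a = hG.depth r b + 1 := by
        rw [depth, depth, he, Walk.length_cons]
      exact absurd (hmin b hb) (by omega)
    · rw [IsDescendant, he, Walk.support_cons]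
      exact List.mem_cons_of_mem _ (Walk.start_mem_support _)
  · exact ha.of_adj hat hab

variable (hG r)

noncomputable def descendants [DecidableEq V] (W : Finset V) (v : V) : Finset V :=
  {u ∈ W | hG.IsDescendant r u v}

lemma isGenIndepSet_of_card_descendants_le [DecidableEq V] {k : ℕ} {A : Finset V}
    (h : ∀ t ∈ A, #(hG.descendants r A t) ≤ k) : G.IsGenIndepSet (k + 1) A := by
  intro T hTA hTc
  obtain ⟨t, htT, ht⟩ := exists_forall_isDescendant (hG := hG) (r := r) hTc
  have hsub : T ⊆ hG.descendants r A t := fun x hx => mem_filter.2 ⟨hTA hx, ht x hx⟩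
  exact Nat.lt_succ_of_le ((card_le_card hsub).trans (h t (hTA htT)))

lemma isGenIndepSet_erase_descendants [DecidableEq V] {k : ℕ} {W : Finset V} {v : V}
    (hdeep : ∀ t ∈ W, hG.depth r v < hG.depth r t → #(hG.descendants r W t) ≤ k) :
    G.IsGenIndepSet (k + 1) ((hG.descendants r W v).erase v) := by
  refine isGenIndepSet_of_card_descendants_le hG r fun t ht => ?_
  obtain ⟨htv, htD⟩ := mem_erase.1 ht
  obtain ⟨htW, htv'⟩ := mem_filter.1 htD
  refine (card_le_card (filter_subset_filter _ ?_)).trans (hdeep t htW (htv'.depth_lt htv))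
  exact (erase_subset _ _).trans (filter_subset _ _)

variable {hG r}

lemma not_adj_of_mem_erase_descendants_of_notMem [DecidableEq V] {W : Finset V} {v a b : V}
    (ha : a ∈ (hG.descendants r W v).erase v) (hbW : b ∈ W)
    (hb : b ∉ hG.descendants r W v) : ¬ G.Adj a b := fun hab =>
  have hav := (mem_filter.1 (mem_of_mem_erase ha)).2
  hb (mem_filter.2 ⟨hbW, hav.of_adj (ne_of_mem_erase ha) hab⟩)

end Rooted

theorem exists_isGenIndepSet_mul_card_le [DecidableEq V] (hG : G.IsTree) (k : ℕ)
    (W : Finset V) : ∃ S ⊆ W, G.IsGenIndepSet (k + 1) S ∧ k * #W ≤ (k + 1) * #S := by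
  obtain ⟨r⟩ := hG.connected.nonempty
  induction W using Finset.strongInduction with
  | H W ih =>
  set big := {v ∈ W | k + 1 ≤ #(hG.descendants r W v)}
  by_cases hbig : big.Nonempty
  swap
  · refine ⟨W, subset_rfl, isGenIndepSet_of_card_descendants_le hG r fun t ht => ?_,
      Nat.mul_le_mul_right _ k.le_succ⟩
    by_contra! h
    exact hbig ⟨t, mem_filter.2 ⟨ht, h⟩⟩
  obtain ⟨v, hv, hvmax⟩ := exists_max_image big (hG.depth r) hbig
  obtain ⟨hvW, hvbig⟩ := mem_filter.1 hv
  set D := hG.descendants r W v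
  have hDW : D ⊆ W := filter_subset _ _
  have hvD : v ∈ D := mem_filter.2 ⟨hvW, isDescendant_refl v⟩
  obtain ⟨S, hSW, hS, hcard⟩ := ih (W \ D) (sdiff_ssubset hDW ⟨v, hvD⟩)
  have hA : G.IsGenIndepSet (k + 1) (D.erase v) := by
    refine isGenIndepSet_erase_descendants hG r fun t htW hdeeper => ?_
    by_contra! h
    exact (hvmax t (mem_filter.2 ⟨htW, h⟩)).not_gt hdeeper
  have hsep : ∀ a ∈ D.erase v, ∀ b ∈ S, ¬ G.Adj a b := fun a ha b hb =>
    have ⟨hbW, hbD⟩ := mem_sdiff.1 (hSW hb)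
    not_adj_of_mem_erase_descendants_of_notMem ha hbW hbD
  have hdisj : Disjoint (D.erase v) S :=
    Finset.disjoint_left.2 fun x hx hxS => (mem_sdiff.1 (hSW hxS)).2 (mem_of_mem_erase hx)
  refine ⟨D.erase v ∪ S, union_subset ((erase_subset _ _).trans hDW) (hSW.trans sdiff_subset),
    hA.union hS hsep, ?_⟩
  rw [card_union_of_disjoint hdisj, card_erase_of_mem hvD]
  rw [card_sdiff_of_subset hDW] at hcard
  obtain ⟨e, he⟩ := Nat.exists_eq_add_of_le (card_le_card hDW)
  obtain ⟨d, hd⟩ := Nat.exists_eq_add_of_le hvbig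
  rw [he, Nat.add_sub_cancel_left] at hcard
  rw [he, hd, show k + 1 + d - 1 = k + d by omega]
  nlinarith

theorem mul_card_le_genIndepNum [Fintype V] (hG : G.IsTree) (k : ℕ) :
    k * Fintype.card V ≤ (k + 1) * G.genIndepNum (k + 1) := by
  classical
  obtain ⟨S, -, hS, hcard⟩ := hG.exists_isGenIndepSet_mul_card_le k univ
  exact (card_univ (α := V) ▸ hcard).trans (Nat.mul_le_mul_left _ hS.card_le_genIndepNum)

end IsTree

end SimpleGraph

/-- If `T` is a tree on `n` vertices, then `α₄(T) ≥ 3n/4`. -/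
theorem genIndepNum_tree_ge {V : Type*} [Fintype V] (G : SimpleGraph V)
    (hconn : G.Connected) (hacyc : G.IsAcyclic) :
    (G.genIndepNum 4 : ℚ) ≥ 3 * (Nat.card V : ℚ) / 4 := by
  have h : 3 * Fintype.card V ≤ 4 * G.genIndepNum 4 :=
    SimpleGraph.IsTree.mul_card_le_genIndepNum ⟨hconn, hacyc⟩ 3
  rw [Nat.card_eq_fintype_card, ge_iff_le, div_le_iff₀ four_pos, mul_comm _ (4 : ℚ)]
  exact_mod_cast h
end

section
/- For an integer n ≥ 3, the cycle C_n satisfies α_4(C_n) = (3/4)(n − 1) if and only if n ≡ 1 (mod 4). -/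
section Aux

open SimpleGraph Finset

/-- reachability preserves any function constant on edges -/
lemma reach_const {V : Type*} {G : SimpleGraph V} (f : V → ℕ)
    (hf : ∀ a b, G.Adj a b → f a = f b) {u v : V} (h : G.Reachable u v) : f u = f v := by
  obtain ⟨p⟩ := h
  induction p with
  | nil => rfl
  | cons h p ih => exact (hf _ _ h).trans ih

lemma fin_sub_val {n : ℕ} (a b : Fin n) : (a - b).val = (n - b.val + a.val) % n := by
  rw [Fin.sub_def]

lemma neq_of_window {n v a b : ℕ} (hab : a < b) (hb : b < n) (h : (v + a) % n = (v + b) % n) :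
    False := by
  have h' : (v + a) ≡ (v + b) [MOD n] := h
  have hd := (Nat.modEq_iff_dvd' (by omega)).mp h'
  have : v + b - (v + a) = b - a := by omega
  rw [this] at hd
  have := Nat.le_of_dvd (by omega) hd
  omega

lemma fin_val_add_one {n : ℕ} [NeZero n] (a : Fin n) : (a + 1).val = (a.val + 1) % n := by
  have h : (a + 1).val = (a.val + 1 % n) % n := by rw [Fin.add_def, Fin.val_one']
  rw [h]
  conv_rhs => rw [Nat.add_mod]
  rw [Nat.mod_eq_of_lt a.isLt]

lemma cycle_adj_succ {n : ℕ} [NeZero n] (hn : 2 ≤ n) (a : Fin n) :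
    (cycleGraph n).Adj a (a + 1) := by
  rw [cycleGraph_adj']
  right
  rw [add_sub_cancel_left, Fin.val_one']
  exact Nat.mod_eq_of_lt hn

/-- val-level consequence of adjacency in the cycle -/
lemma cycle_adj_val {n : ℕ} (hn : 2 ≤ n) {u v : Fin n} (h : (cycleGraph n).Adj u v) :
    u.val + 1 = v.val ∨ v.val + 1 = u.val ∨ (u.val = 0 ∧ v.val = n - 1) ∨
      (v.val = 0 ∧ u.val = n - 1) := by
  have hu := u.isLt
  have hv := v.isLt
  rw [cycleGraph_adj'] at h
  rcases h with h | h
  · rw [fin_sub_val] at h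
    rcases le_or_gt v.val u.val with hle | hlt
    · have he : n - v.val + u.val = n + (u.val - v.val) := by omega
      rw [he, Nat.add_mod_left, Nat.mod_eq_of_lt (by omega)] at h
      omega
    · rw [Nat.mod_eq_of_lt (by omega)] at h
      omega
  · rw [fin_sub_val] at h
    rcases le_or_gt u.val v.val with hle | hlt
    · have he : n - u.val + v.val = n + (v.val - u.val) := by omega
      rw [he, Nat.add_mod_left, Nat.mod_eq_of_lt (by omega)] at h
      omega
    · rw [Nat.mod_eq_of_lt (by omega)] at h
      omega

variable {m : ℕ}

/-- the optimal set : blocks of 3 out of every 4, stopping before 4m -/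
noncomputable def goodSet (m : ℕ) : Finset (Fin (4*m+1)) :=
  Finset.univ.filter (fun i => i.val % 4 ≠ 3 ∧ i.val < 4*m)

lemma mem_goodSet {i : Fin (4*m+1)} : i ∈ goodSet m ↔ i.val % 4 ≠ 3 ∧ i.val < 4*m := by
  simp [goodSet]

lemma goodSet_card : (goodSet m).card = 3 * m := by
  classical
  have hinj : Function.Injective (fun j : Fin (3*m) =>
      (⟨4*(j.val/3) + j.val % 3, by omega⟩ : Fin (4*m+1))) := by
    intro a b hab
    rw [Fin.ext_iff] at hab ⊢
    simp only at hab
    omega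
  have himg : goodSet m = Finset.univ.image (fun j : Fin (3*m) =>
      (⟨4*(j.val/3) + j.val % 3, by omega⟩ : Fin (4*m+1))) := by
    ext i
    rw [mem_goodSet, Finset.mem_image]
    constructor
    · rintro ⟨h1, h2⟩
      refine ⟨⟨3*(i.val/4) + i.val % 4, by omega⟩, Finset.mem_univ _, ?_⟩
      rw [Fin.ext_iff]
      simp only
      omega
    · rintro ⟨j, -, rfl⟩
      simp only
      omega
  rw [himg, Finset.card_image_of_injective _ hinj, Finset.card_univ, Fintype.card_fin]

lemma goodSet_isGenIndepSet (hm : 1 ≤ m) :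
    (SimpleGraph.cycleGraph (4*m+1)).IsGenIndepSet 4 (goodSet m) := by
  classical
  intro T hT hconn
  rcases T.eq_empty_or_nonempty with rfl | ⟨t0, ht0⟩
  · simp
  -- every edge inside goodSet stays within a block i.val / 4
  have hedge : ∀ a b : Fin (4*m+1), a ∈ goodSet m → b ∈ goodSet m →
      (SimpleGraph.cycleGraph (4*m+1)).Adj a b → a.val / 4 = b.val / 4 := by
    intro a b ha hb hab
    rw [mem_goodSet] at ha hb
    have := cycle_adj_val (by omega) hab
    omega
  -- all vertices of T are in the block of t0
  have hconst : ∀ t ∈ T, t.val / 4 = t0.val / 4 := by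
    intro t ht
    have hr := hconn.preconnected ⟨t, by simpa using ht⟩ ⟨t0, by simpa using ht0⟩
    apply reach_const (G := (SimpleGraph.cycleGraph (4*m+1)).induce (T : Set (Fin (4*m+1))))
      (fun x => (x : Fin (4*m+1)).val / 4) ?_ hr
    intro x y hxy
    exact hedge x.1 y.1 (hT (Finset.mem_coe.mp x.2)) (hT (Finset.mem_coe.mp y.2))
      (by simpa using hxy)
  -- so T has at most 3 elements
  set q := t0.val / 4 with hq
  have himg : T.image Fin.val ⊆ {4*q, 4*q+1, 4*q+2} := by
    intro x hx
    rw [Finset.mem_image] at hx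
    obtain ⟨t, ht, rfl⟩ := hx
    have h1 := hconst t ht
    have h2 := (mem_goodSet.mp (hT ht)).1
    simp only [Finset.mem_insert, Finset.mem_singleton]
    omega
  have hcard : T.card ≤ 3 := by
    rw [← Finset.card_image_of_injective T Fin.val_injective]
    calc (T.image Fin.val).card ≤ ({4*q, 4*q+1, 4*q+2} : Finset ℕ).card :=
          Finset.card_le_card himg
      _ ≤ 3 := (Finset.card_insert_le _ _).trans (by
          simp [Nat.add_le_add_iff_right, Finset.card_insert_le])
  omega

lemma genIndep_card_le (hm : 1 ≤ m) (S : Finset (Fin (4*m+1)))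
    (hS : (SimpleGraph.cycleGraph (4*m+1)).IsGenIndepSet 4 S) : S.card ≤ 3 * m := by
  classical
  by_contra hc
  push_neg at hc
  have hn2 : (2:ℕ) ≤ 4*m+1 := by omega
  -- find four consecutive vertices inside S
  have hwin : ∃ i : Fin (4*m+1), i ∈ S ∧ i+1 ∈ S ∧ i+1+1 ∈ S ∧ i+1+1+1 ∈ S := by
    by_contra hw
    push_neg at hw
    have hchoice : ∀ i : Fin (4*m+1), ∃ d, d ∈ ({i, i+1, i+1+1, i+1+1+1} : Finset (Fin (4*m+1)))
        ∧ d ∉ S := by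
      intro i
      rcases Decidable.em (i ∈ S) with hi | hi
      · rcases Decidable.em (i+1 ∈ S) with h1 | h1
        · rcases Decidable.em (i+1+1 ∈ S) with h2 | h2
          · exact ⟨i+1+1+1, by simp, hw i hi h1 h2⟩
          · exact ⟨i+1+1, by simp, h2⟩
        · exact ⟨i+1, by simp, h1⟩
      · exact ⟨i, by simp, hi⟩
    set w : Fin (4*m+1) → Fin (4*m+1) := fun i => (hchoice i).choose with hwdef
    have hspec : ∀ i, w i ∈ ({i, i+1, i+1+1, i+1+1+1} : Finset (Fin (4*m+1))) ∧ w i ∉ S :=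
      fun i => ⟨(hchoice i).choose_spec.1, (hchoice i).choose_spec.2⟩
    have hfib : ∀ i : Fin (4*m+1), i ∈ ({w i, w i - 1, w i - 1 - 1, w i - 1 - 1 - 1} :
        Finset (Fin (4*m+1))) := by
      intro i
      have := (hspec i).1
      simp only [Finset.mem_insert, Finset.mem_singleton] at this ⊢
      rcases this with h | h | h | h
      · exact Or.inl h.symm
      · exact Or.inr (Or.inl (by rw [h]; abel))
      · exact Or.inr (Or.inr (Or.inl (by rw [h]; abel)))
      · exact Or.inr (Or.inr (Or.inr (by rw [h]; abel)))
    have hcardle : (Finset.univ : Finset (Fin (4*m+1))).card ≤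
        4 * ((Finset.univ : Finset (Fin (4*m+1))).image w).card := by
      apply Finset.card_le_mul_card_image
      intro b hb
      calc ({a ∈ Finset.univ | w a = b} : Finset (Fin (4*m+1))).card
          ≤ ({b, b - 1, b - 1 - 1, b - 1 - 1 - 1} : Finset (Fin (4*m+1))).card := by
            apply Finset.card_le_card
            intro i hi
            rw [Finset.mem_filter] at hi
            have := hfib i
            rw [hi.2] at this
            exact this
        _ ≤ 4 := (Finset.card_insert_le _ _).trans (by
            have h1 := Finset.card_insert_le (b-1) ({b-1-1, b-1-1-1} : Finset (Fin (4*m+1)))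
            have h2 := Finset.card_insert_le (b-1-1) ({b-1-1-1} : Finset (Fin (4*m+1)))
            simp only [Finset.card_singleton] at h1 h2 ⊢
            omega)
    have himg : (Finset.univ : Finset (Fin (4*m+1))).image w ⊆ Sᶜ := by
      intro x hx
      rw [Finset.mem_image] at hx
      obtain ⟨i, -, rfl⟩ := hx
      rw [Finset.mem_compl]
      exact (hspec i).2
    have h1 : ((Finset.univ : Finset (Fin (4*m+1))).image w).card ≤ Sᶜ.card :=
      Finset.card_le_card himg
    have h2 : Sᶜ.card = (4*m+1) - S.card := by
      rw [Finset.card_compl, Fintype.card_fin]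
    have h3 : (Finset.univ : Finset (Fin (4*m+1))).card = 4*m+1 := by
      rw [Finset.card_univ, Fintype.card_fin]
    have h4 : S.card ≤ 4*m+1 := by
      calc S.card ≤ (Finset.univ : Finset (Fin (4*m+1))).card := Finset.card_le_card
            (Finset.subset_univ S)
        _ = 4*m+1 := h3
    omega
  obtain ⟨i, hi0, hi1, hi2, hi3⟩ := hwin
  set a0 := i
  set a1 := i + 1
  set a2 := i + 1 + 1
  set a3 := i + 1 + 1 + 1
  have hv1 : a1.val = (a0.val + 1) % (4*m+1) := fin_val_add_one a0
  have hv2 : a2.val = (a0.val + 2) % (4*m+1) := by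
    rw [show a2 = a1 + 1 from rfl, fin_val_add_one a1, hv1, Nat.mod_add_mod]
  have hv3 : a3.val = (a0.val + 3) % (4*m+1) := by
    rw [show a3 = a2 + 1 from rfl, fin_val_add_one a2, hv2, Nat.mod_add_mod]
  have hv0 : a0.val = (a0.val + 0) % (4*m+1) := by
    have : (a0.val + 0) % (4*m+1) = a0.val := by
      rw [Nat.add_zero]
      exact Nat.mod_eq_of_lt a0.isLt
    exact this.symm
  have hne : ∀ (x y : Fin (4*m+1)) (a b : ℕ), a < b → b < 4*m+1 →
      x.val = (a0.val + a) % (4*m+1) → y.val = (a0.val + b) % (4*m+1) → x ≠ y := by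
    intro x y a b hab hb hx hy hxy
    exact neq_of_window hab hb (by rw [← hx, ← hy, hxy])
  set T : Finset (Fin (4*m+1)) := {a0, a1, a2, a3} with hTdef
  have hTS : T ⊆ S := by
    intro x hx
    simp only [hTdef, Finset.mem_insert, Finset.mem_singleton] at hx
    rcases hx with rfl | rfl | rfl | rfl <;> assumption
  have hm5 : (4:ℕ) ≤ 4*m+1-1 := by omega
  have hTcard : T.card = 4 := by
    rw [hTdef]
    rw [Finset.card_insert_of_notMem, Finset.card_insert_of_notMem,
      Finset.card_insert_of_notMem, Finset.card_singleton]
    · simp only [Finset.mem_singleton]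
      exact hne a2 a3 2 3 (by omega) (by omega) hv2 hv3
    · simp only [Finset.mem_insert, Finset.mem_singleton]
      push_neg
      exact ⟨hne a1 a2 1 2 (by omega) (by omega) hv1 hv2,
        hne a1 a3 1 3 (by omega) (by omega) hv1 hv3⟩
    · simp only [Finset.mem_insert, Finset.mem_singleton]
      push_neg
      exact ⟨hne a0 a1 0 1 (by omega) (by omega) hv0 hv1,
        hne a0 a2 0 2 (by omega) (by omega) hv0 hv2,
        hne a0 a3 0 3 (by omega) (by omega) hv0 hv3⟩
  have hmem : ∀ x ∈ T, x ∈ (T : Set (Fin (4*m+1))) := fun x hx => by simpa using hx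
  have hconn : ((SimpleGraph.cycleGraph (4*m+1)).induce (T : Set (Fin (4*m+1)))).Connected := by
    have h0 : a0 ∈ T := by simp [hTdef]
    have h1 : a1 ∈ T := by simp [hTdef]
    have h2 : a2 ∈ T := by simp [hTdef]
    have h3 : a3 ∈ T := by simp [hTdef]
    set G' := (SimpleGraph.cycleGraph (4*m+1)).induce (T : Set (Fin (4*m+1))) with hG'
    set x0 : ↥(T : Set (Fin (4*m+1))) := ⟨a0, hmem _ h0⟩
    set x1 : ↥(T : Set (Fin (4*m+1))) := ⟨a1, hmem _ h1⟩
    set x2 : ↥(T : Set (Fin (4*m+1))) := ⟨a2, hmem _ h2⟩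
    set x3 : ↥(T : Set (Fin (4*m+1))) := ⟨a3, hmem _ h3⟩
    have hadj01 : G'.Adj x0 x1 := by
      simp only [hG', SimpleGraph.comap_adj]
      exact cycle_adj_succ hn2 a0
    have hadj12 : G'.Adj x1 x2 := by
      simp only [hG', SimpleGraph.comap_adj]
      exact cycle_adj_succ hn2 a1
    have hadj23 : G'.Adj x2 x3 := by
      simp only [hG', SimpleGraph.comap_adj]
      exact cycle_adj_succ hn2 a2
    have hreach : ∀ y : ↥(T : Set (Fin (4*m+1))), G'.Reachable x0 y := by
      intro y
      have hy : (y : Fin (4*m+1)) ∈ T := y.2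
      simp only [hTdef, Finset.mem_insert, Finset.mem_singleton] at hy
      rcases hy with hy | hy | hy | hy
      · have : y = x0 := Subtype.ext hy
        rw [this]
      · have : y = x1 := Subtype.ext hy
        rw [this]; exact hadj01.reachable
      · have : y = x2 := Subtype.ext hy
        rw [this]; exact hadj01.reachable.trans hadj12.reachable
      · have : y = x3 := Subtype.ext hy
        rw [this]; exact (hadj01.reachable.trans hadj12.reachable).trans hadj23.reachable
    haveI : Nonempty ↥(T : Set (Fin (4*m+1))) := ⟨x0⟩
    exact ⟨fun u v => (hreach u).symm.trans (hreach v)⟩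
  have := hS T hTS hconn
  omega

lemma genIndepNum_cycle (hm : 1 ≤ m) :
    (SimpleGraph.cycleGraph (4*m+1)).genIndepNum 4 = 3 * m := by
  classical
  rw [SimpleGraph.genIndepNum]
  apply le_antisymm
  · apply csSup_le
    · exact ⟨3*m, goodSet m, goodSet_isGenIndepSet hm, goodSet_card⟩
    · rintro k ⟨S, hS, rfl⟩
      exact genIndep_card_le hm S hS
  · apply le_csSup
    · exact ⟨3*m, by rintro k ⟨S, hS, rfl⟩; exact genIndep_card_le hm S hS⟩
    · exact ⟨goodSet m, goodSet_isGenIndepSet hm, goodSet_card⟩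

end Aux

/-- For `n ≥ 3`, `α₄(Cₙ) = (3/4)(n - 1)` if and only if `n ≡ 1 (mod 4)`. -/
theorem genIndepNum_cycleGraph_eq_iff (n : ℕ) (hn : 3 ≤ n) :
    ((SimpleGraph.cycleGraph n).genIndepNum 4 : ℚ) = 3 / 4 * ((n : ℚ) - 1) ↔
      n % 4 = 1 := by
  constructor
  · intro h
    set a := (SimpleGraph.cycleGraph n).genIndepNum 4 with ha
    have h4 : (4:ℚ) * a = 3 * ((n:ℚ) - 1) := by linarith
    have hcast : ((4 * a : ℕ) : ℚ) = ((3 * (n - 1) : ℕ) : ℚ) := by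
      push_cast [Nat.cast_sub (by omega : 1 ≤ n)]
      linarith
    have := Nat.cast_inj.mp hcast
    omega
  · intro h
    obtain ⟨m, hm, rfl⟩ : ∃ m, 1 ≤ m ∧ n = 4*m+1 := ⟨n/4, by omega, by omega⟩
    rw [genIndepNum_cycle hm]
    push_cast
    ring
end

section
/- If every two cycles of a graph G are vertex-disjoint, then ω(G) equals the number of cycles of G, where ω denotes the dimension of the cycle space. -/
/-- The dimension of the cycle space of `G`: `ω(G) = m - n + c`, where `m` is the number of
edges, `n` the number of vertices and `c` the number of connected components. -/
noncomputable def SimpleGraph.cycleDim {V : Type*} (G : SimpleGraph V) : ℤ :=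
  (Nat.card G.edgeSet : ℤ) - (Nat.card V : ℤ) + (Nat.card G.ConnectedComponent : ℤ)

/-!
Induct on the number of edges and delete an edge `e`. If `e` is a bridge, the number of
components goes up by one and no cycle is lost, so `ω` is unchanged. Otherwise `e` lies on a
cycle; deleting it keeps the components, lowers `ω` by one, and destroys exactly one cycle,
since by vertex-disjointness every cycle through `e` is the same subgraph.
-/

namespace SimpleGraph

variable {V : Type*} {G : SimpleGraph V}

def cycleEdgeSets (G : SimpleGraph V) : Set (Set (Sym2 V)) :=
  {E | ∃ (u : V) (c : G.Walk u u), c.IsCycle ∧ E = {e | e ∈ c.edges}}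

def CyclesVertexDisjoint (G : SimpleGraph V) : Prop :=
  ∀ (u v : V) (c : G.Walk u u) (d : G.Walk v v), c.IsCycle → d.IsCycle →
    (∃ w, w ∈ c.support ∧ w ∈ d.support) → {e | e ∈ c.edges} = {e | e ∈ d.edges}

lemma CyclesVertexDisjoint.anti {H : SimpleGraph V} (h : H ≤ G) (hG : G.CyclesVertexDisjoint) :
    H.CyclesVertexDisjoint := fun u v c d hc hd hcd ↦ by
  simpa using hG u v (c.mapLe h) (d.mapLe h) (hc.mapLe h) (hd.mapLe h) (by simpa using hcd)

lemma cycleEdgeSets_mono {H : SimpleGraph V} (h : H ≤ G) :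
    H.cycleEdgeSets ⊆ G.cycleEdgeSets := by
  rintro E ⟨u, c, hc, rfl⟩
  exact ⟨u, c.mapLe h, hc.mapLe h, by simp⟩

lemma IsAcyclic.cycleEdgeSets_eq_empty (hG : G.IsAcyclic) : G.cycleEdgeSets = ∅ :=
  Set.eq_empty_iff_forall_notMem.mpr fun _ ⟨_, c, hc, _⟩ ↦ hG c hc

lemma notMem_cycleEdgeSets_deleteEdges {e : Sym2 V} {E : Set (Sym2 V)} (he : e ∈ E) :
    E ∉ (G.deleteEdges {e}).cycleEdgeSets := by
  rintro ⟨u, c, -, rfl⟩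
  simpa [edgeSet_deleteEdges] using c.edges_subset_edgeSet he

lemma cycleEdgeSets_deleteEdges_of_isBridge {e : Sym2 V} (he : G.IsBridge e) :
    (G.deleteEdges {e}).cycleEdgeSets = G.cycleEdgeSets := by
  refine (cycleEdgeSets_mono (deleteEdges_le _)).antisymm ?_
  rintro E ⟨u, c, hc, rfl⟩
  have hce (f) (hf : f ∈ c.edges) : f ∉ ({e} : Set (Sym2 V)) := by
    rintro rfl
    exact he.notMem_edges_of_isCycle hc hf
  exact ⟨u, c.toDeleteEdges {e} hce, hc.transfer _, by simp⟩

lemma cycleEdgeSets_eq_insert_of_unique {u : V} {c : G.Walk u u} (hc : c.IsCycle)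
    {e : Sym2 V} (hunique : ∀ (v : V) (d : G.Walk v v), d.IsCycle → e ∈ d.edges →
      {f | f ∈ d.edges} = {f | f ∈ c.edges}) :
    G.cycleEdgeSets = insert {f | f ∈ c.edges} (G.deleteEdges {e}).cycleEdgeSets := by
  refine subset_antisymm ?_
    (Set.insert_subset ⟨u, c, hc, rfl⟩ (cycleEdgeSets_mono (deleteEdges_le _)))
  rintro E ⟨v, d, hd, rfl⟩
  by_cases hed : e ∈ d.edges
  · exact Or.inl (hunique v d hd hed)
  · exact Or.inr ⟨v, d.toDeleteEdge e hed, hd.transfer _, by simp⟩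

lemma card_cycleEdgeSets_eq_add_one_of_unique [Finite V] {u : V} {c : G.Walk u u}
    (hc : c.IsCycle) {e : Sym2 V} (hec : e ∈ c.edges)
    (hunique : ∀ (v : V) (d : G.Walk v v), d.IsCycle → e ∈ d.edges →
      {f | f ∈ d.edges} = {f | f ∈ c.edges}) :
    Nat.card G.cycleEdgeSets = Nat.card (G.deleteEdges {e}).cycleEdgeSets + 1 := by
  rw [Nat.card_coe_set_eq, Nat.card_coe_set_eq, cycleEdgeSets_eq_insert_of_unique hc hunique,
    Set.ncard_insert_of_notMem (notMem_cycleEdgeSets_deleteEdges hec)]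

lemma card_edgeSet_deleteEdges_add_one [Finite V] {e : Sym2 V} (he : e ∈ G.edgeSet) :
    Nat.card (G.deleteEdges {e}).edgeSet + 1 = Nat.card G.edgeSet := by
  rw [Nat.card_coe_set_eq, Nat.card_coe_set_eq, edgeSet_deleteEdges]
  exact Set.ncard_sdiff_singleton_add_one he

lemma Reachable.reachable_deleteEdges_or {x y : V} (h : G.Reachable x y) (v w : V) :
    (G.deleteEdges {s(v, w)}).Reachable x y ∨
      (G.deleteEdges {s(v, w)}).Reachable x v ∧ (G.deleteEdges {s(v, w)}).Reachable w y ∨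
      (G.deleteEdges {s(v, w)}).Reachable x w ∧ (G.deleteEdges {s(v, w)}).Reachable v y := by
  obtain ⟨p⟩ := h
  induction p with
  | nil => exact Or.inl .rfl
  | @cons a b c hab p ih =>
    by_cases he : s(a, b) = s(v, w)
    · rcases Sym2.eq_iff.mp he with ⟨rfl, rfl⟩ | ⟨rfl, rfl⟩ <;>
        rcases ih with h | ⟨h₁, h₂⟩ | ⟨h₁, h₂⟩
      exacts [Or.inr (Or.inl ⟨.rfl, h⟩), Or.inl (h₁.symm.trans h₂), Or.inl h₂,
        Or.inr (Or.inr ⟨.rfl, h⟩), Or.inl h₂, Or.inl (h₁.symm.trans h₂)]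
    · have hab' : (G.deleteEdges {s(v, w)}).Adj a b := deleteEdges_adj.mpr ⟨hab, he⟩
      rcases ih with h | ⟨h₁, h₂⟩ | ⟨h₁, h₂⟩
      exacts [Or.inl (hab'.reachable.trans h),
        Or.inr (Or.inl ⟨hab'.reachable.trans h₁, h₂⟩),
        Or.inr (Or.inr ⟨hab'.reachable.trans h₁, h₂⟩)]

lemma card_connectedComponent_deleteEdges_of_not_isBridge {v w : V}
    (h : ¬ G.IsBridge s(v, w)) :
    Nat.card (G.deleteEdges {s(v, w)}).ConnectedComponent = Nat.card G.ConnectedComponent := by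
  have hcases (x y : V) (hxy : G.Reachable x y) := hxy.reachable_deleteEdges_or v w
  have hle := G.deleteEdges_le {s(v, w)}
  rw [isBridge_iff, not_not] at h
  generalize G.deleteEdges {s(v, w)} = G' at *
  refine Nat.card_eq_of_bijective _ ⟨?_, ConnectedComponent.surjective_map_ofLE hle⟩
  refine ConnectedComponent.ind₂ fun x y hxy ↦ ?_
  simp only [ConnectedComponent.map_mk, Hom.ofLE_apply, ConnectedComponent.eq] at hxy ⊢
  rcases hcases x y hxy with hxy | ⟨hxv, hwy⟩ | ⟨hxw, hvy⟩
  exacts [hxy, hxv.trans (h.trans hwy), hxw.trans (h.symm.trans hvy)]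

lemma card_connectedComponent_deleteEdges_of_isBridge [Finite V] {v w : V}
    (he : s(v, w) ∈ G.edgeSet) (h : G.IsBridge s(v, w)) :
    Nat.card (G.deleteEdges {s(v, w)}).ConnectedComponent = Nat.card G.ConnectedComponent + 1 := by
  have hcases (x y : V) (hxy : G.Reachable x y) := hxy.reachable_deleteEdges_or v w
  have hle := G.deleteEdges_le {s(v, w)}
  rw [isBridge_iff] at h
  generalize G.deleteEdges {s(v, w)} = G' at *
  -- Deleting the bridge splits the component of `v` and `w` in two; dropping that of `w`
  -- leaves exactly one preimage of each component of `G`.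
  let f (c : ({G'.connectedComponentMk w}ᶜ : Set G'.ConnectedComponent)) : G.ConnectedComponent :=
    c.1.map (Hom.ofLE hle)
  have hf : f.Bijective := by
    refine ⟨fun ⟨a, ha⟩ ⟨b, hb⟩ hab ↦ ?_, fun c ↦ ?_⟩
    · induction a using ConnectedComponent.ind with | _ x =>
      induction b using ConnectedComponent.ind with | _ y =>
      simp only [f, ConnectedComponent.map_mk, Hom.ofLE_apply, ConnectedComponent.eq,
        Set.mem_compl_singleton_iff] at hab ha hb
      rw [Subtype.mk.injEq, ConnectedComponent.eq]
      rcases hcases x y hab with hxy | ⟨-, hwy⟩ | ⟨hxw, -⟩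
      exacts [hxy, (hb (ConnectedComponent.sound hwy.symm)).elim,
        (ha (ConnectedComponent.sound hxw)).elim]
    · induction c using ConnectedComponent.ind with | _ y =>
      by_cases hy : G'.connectedComponentMk y = G'.connectedComponentMk w
      · have hvw : G'.connectedComponentMk v ≠ G'.connectedComponentMk w :=
          fun hvw ↦ h (ConnectedComponent.eq.mp hvw)
        refine ⟨⟨_, hvw⟩, ?_⟩
        simp only [f, ConnectedComponent.map_mk, Hom.ofLE_apply, ConnectedComponent.eq]
        exact he.reachable.trans (ConnectedComponent.eq.mp hy |>.mono hle).symm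
      · exact ⟨⟨_, hy⟩, rfl⟩
  rw [← Nat.card_eq_of_bijective f hf, Nat.card_coe_set_eq,
    ← Set.ncard_add_ncard_compl {G'.connectedComponentMk w}, Set.ncard_singleton, add_comm]

lemma cycleDim_bot : (⊥ : SimpleGraph V).cycleDim = 0 := by
  have : Nat.card V = Nat.card (⊥ : SimpleGraph V).ConnectedComponent :=
    Nat.card_eq_of_bijective _ ⟨fun _ _ h ↦ reachable_bot.mp (ConnectedComponent.eq.mp h),
      Quot.mk_surjective⟩
  simp [cycleDim, this]

lemma cycleDim_deleteEdges_of_isBridge [Finite V] {v w : V} (he : s(v, w) ∈ G.edgeSet)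
    (h : G.IsBridge s(v, w)) : (G.deleteEdges {s(v, w)}).cycleDim = G.cycleDim := by
  have hm := card_edgeSet_deleteEdges_add_one he
  have hc := card_connectedComponent_deleteEdges_of_isBridge he h
  simp only [cycleDim]
  omega

lemma cycleDim_deleteEdges_of_not_isBridge [Finite V] {v w : V} (he : s(v, w) ∈ G.edgeSet)
    (h : ¬ G.IsBridge s(v, w)) : (G.deleteEdges {s(v, w)}).cycleDim + 1 = G.cycleDim := by
  have hm := card_edgeSet_deleteEdges_add_one he
  have hc := card_connectedComponent_deleteEdges_of_not_isBridge h
  simp only [cycleDim]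
  omega

theorem CyclesVertexDisjoint.cycleDim_eq_card_cycleEdgeSets [Finite V]
    (hG : G.CyclesVertexDisjoint) : G.cycleDim = Nat.card G.cycleEdgeSets := by
  induction hn : Nat.card G.edgeSet generalizing G with
  | zero =>
    obtain rfl : G = ⊥ := by
      rwa [Nat.card_coe_set_eq, Set.ncard_eq_zero, edgeSet_eq_empty] at hn
    simp [cycleDim_bot, isAcyclic_bot.cycleEdgeSets_eq_empty]
  | succ n ih =>
    obtain ⟨⟨e, he⟩⟩ : Nonempty G.edgeSet := Nat.card_pos_iff.mp (by omega) |>.1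
    induction e using Sym2.ind with | _ v w =>
    have ih' := ih (G := G.deleteEdges {s(v, w)}) (hG.anti (deleteEdges_le _))
      (by have := card_edgeSet_deleteEdges_add_one he; omega)
    by_cases hb : G.IsBridge s(v, w)
    · rw [← cycleDim_deleteEdges_of_isBridge he hb, ih',
        cycleEdgeSets_deleteEdges_of_isBridge hb]
    · obtain ⟨u, c, hc, hec⟩ :
          ∃ (u : V) (c : G.Walk u u), c.IsCycle ∧ s(v, w) ∈ c.edges := by
        simpa [isBridge_iff_forall_cycle_notMem he] using hb
      have hunique (x : V) (d : G.Walk x x) (hd : d.IsCycle) (hed : s(v, w) ∈ d.edges) :=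
        hG x u d c hd hc
          ⟨v, d.fst_mem_support_of_mem_edges hed, c.fst_mem_support_of_mem_edges hec⟩
      rw [← cycleDim_deleteEdges_of_not_isBridge he hb, ih',
        card_cycleEdgeSets_eq_add_one_of_unique hc hec hunique, Nat.cast_succ]

end SimpleGraph

/-- If every two cycles of `G` are vertex-disjoint (cycles sharing a vertex coincide, i.e.
have the same edge set), then `ω(G)` equals the number of cycles of `G`, where cycles are
counted as subgraphs, i.e. by their edge sets. -/
theorem cycleDim_eq_card_cycles {V : Type*} [Fintype V] (G : SimpleGraph V)
    (hdisj : ∀ (u v : V) (c : G.Walk u u) (d : G.Walk v v), c.IsCycle → d.IsCycle →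
      (∃ w, w ∈ c.support ∧ w ∈ d.support) → {e | e ∈ c.edges} = {e | e ∈ d.edges}) :
    G.cycleDim =
      (Nat.card {E : Set (Sym2 V) |
        ∃ (u : V) (c : G.Walk u u), c.IsCycle ∧ E = {e | e ∈ c.edges}} : ℤ) :=
  SimpleGraph.CyclesVertexDisjoint.cycleDim_eq_card_cycleEdgeSets hdisj
end
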